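/- Let p be a prime and m ∈ ℕ. The ℤ_p-module M^{(m)} ⊆ ℚ_p[x,ξ] is stable under multiplication by the subalgebra A^{(m)} (i.e. A^{(m)}·M^{(m)} ⊆ M^{(m)}), and M^{(m)} is generated as an A^{(m)}-module by the finitely many elements (q^(m)_d!/d!)·x^k ξ^d with 0 ≤ d < 2p^m and 0 ≤ k ≤ 2d. -/

import Mathlib

/-!
STATEMENT 10: Let `p` be prime and `m : ℕ`. The `ℤ_[p]`-module `M^{(m)} ⊆ ℚ_[p][x,ξ]`
is stable under multiplication by the subalgebra `A^{(m)}`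
(`A^{(m)}·M^{(m)} ⊆ M^{(m)}`), and `M^{(m)}` is generated as an `A^{(m)}`-module
by the finitely many elements `(q^(m)_d!/d!)·x^k ξ^d` with `0 ≤ d < 2p^m`,
`0 ≤ k ≤ 2d`.

Here, in `ℚ_[p][x,ξ]` (realized as `MvPolynomial (Fin 2) ℚ_[p]` with `x = X 0`,
`ξ = X 1`), `A^{(m)}` is the `ℤ_[p]`-subalgebra generated by the elements
`(q^(m)_ν!/ν!)·ξ^ν`, `(q^(m)_ν!/ν!)·(xξ)^ν`, `(q^(m)_ν!/ν!)·(x²ξ)^ν` (`ν : ℕ`),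
and `M^{(m)}` is the `ℤ_[p]`-span of the elements `(q^(m)_d!/d!)·x^k ξ^d`
(`d : ℕ`, `0 ≤ k ≤ 2d`).
-/

noncomputable section

/-- `q^(m)_n = ⌊n / p^m⌋`. -/
def qm (p m n : ℕ) : ℕ := n / p ^ m

/-- The scalar `q^(m)_ν! / ν!` in `ℚ_[p]`. -/
def cm (p : ℕ) [Fact p.Prime] (m ν : ℕ) : ℚ_[p] :=
  ((qm p m ν).factorial : ℚ_[p]) / (ν.factorial : ℚ_[p])

/-- The generators `(q^(m)_ν!/ν!)·(x^k ξ)^ν`, `k = 0, 1, 2`, of `A^{(m)}`. -/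
def genA (p : ℕ) [Fact p.Prime] (m : ℕ) (g : Fin 3 × ℕ) :
    MvPolynomial (Fin 2) ℚ_[p] :=
  cm p m g.2 • ((MvPolynomial.X 0) ^ (g.1 : ℕ) * MvPolynomial.X 1) ^ g.2

/-- `A^{(m)}`: the `ℤ_[p]`-subalgebra of `ℚ_[p][x,ξ]` generated by the elements
`genA`, realized as all `ℤ_[p]`-linear combinations of products of generators. -/
def Aset (p : ℕ) [Fact p.Prime] (m : ℕ) : Set (MvPolynomial (Fin 2) ℚ_[p]) :=
  {u | ∃ (s : Finset (List (Fin 3 × ℕ))) (a : List (Fin 3 × ℕ) → ℤ_[p]),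
    u = ∑ w ∈ s, ((a w : ℚ_[p]) • (w.map (genA p m)).prod)}

/-- The spanning elements `(q^(m)_d!/d!)·x^k ξ^d` of `M^{(m)}`. -/
def genM (p : ℕ) [Fact p.Prime] (m d k : ℕ) : MvPolynomial (Fin 2) ℚ_[p] :=
  cm p m d • ((MvPolynomial.X 0) ^ k * (MvPolynomial.X 1) ^ d)

/-- `M^{(m)}`: the `ℤ_[p]`-submodule of `ℚ_[p][x,ξ]` spanned by the elements
`(q^(m)_d!/d!)·x^k ξ^d` for `d : ℕ` and `0 ≤ k ≤ 2d`. -/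
def Mset (p : ℕ) [Fact p.Prime] (m : ℕ) : Set (MvPolynomial (Fin 2) ℚ_[p]) :=
  {u | ∃ (s : Finset (ℕ × ℕ)) (a : ℕ × ℕ → ℤ_[p]),
    (∀ q ∈ s, q.2 ≤ 2 * q.1) ∧
    u = ∑ q ∈ s, ((a q : ℚ_[p]) • genM p m q.1 q.2)}

/-!
Multiplying a generator of `A^{(m)}` into a spanning element of `M^{(m)}` gives
`genA (e, ν) * genM d k = c · genM (ν + d) (eν + k)` with
`c = q_ν! q_d! (ν+d)! / (q_{ν+d}! ν! d!)`. By Legendre's formula the valuation of `n!/q_n!`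
is `∑_{i=1}^m ⌊n/p^i⌋`, which is superadditive in `n` and additive when one summand is `p^m`.
Hence `c` is a `p`-adic integer, which gives `A·M ⊆ M`, and a unit when `ν = p^m`, which lets
one split off a factor `(x^e ξ)^{p^m}` from every spanning element of `ξ`-degree `≥ 2p^m`;
induction on the degree then reduces to degrees `< 2p^m`.
-/

open Finset

namespace Finset

lemma sum_div_add_sum_div_le (s : Finset ℕ) (f : ℕ → ℕ) (a b : ℕ) :
    ∑ i ∈ s, a / f i + ∑ i ∈ s, b / f i ≤ ∑ i ∈ s, (a + b) / f i := by
  rw [← sum_add_distrib]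
  exact sum_le_sum fun i _ => Nat.div_add_div_le_add_div

end Finset

/-- For prime `p`, the `p`-adic valuation of `n! / q^(m)_n!`. -/
def legendreSum (p m n : ℕ) : ℕ := ∑ i ∈ Ico 1 (m + 1), n / p ^ i

lemma legendreSum_add_le (p m a b : ℕ) :
    legendreSum p m a + legendreSum p m b ≤ legendreSum p m (a + b) :=
  sum_div_add_sum_div_le _ _ a b

lemma legendreSum_pow_add (p m b : ℕ) :
    legendreSum p m (p ^ m + b) = legendreSum p m (p ^ m) + legendreSum p m b := by
  rw [legendreSum, legendreSum, legendreSum, ← sum_add_distrib]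
  refine sum_congr rfl fun i hi => Nat.add_div_of_dvd_right (pow_dvd_pow p ?_)
  have := (mem_Ico.1 hi).2
  omega

lemma padicValNat_factorial_eq_add_legendreSum (p : ℕ) [Fact p.Prime] (m n : ℕ) :
    padicValNat p n.factorial = padicValNat p (qm p m n).factorial + legendreSum p m n := by
  set b := Nat.log p n + 1
  have hqb : Nat.log p (qm p m n) < b :=
    Nat.lt_succ_of_le (Nat.log_mono_right (Nat.div_le_self _ _))
  rw [padicValNat_factorial (b := b + m) (by omega), padicValNat_factorial hqb, legendreSum,
    add_comm m 1, ← sum_Ico_consecutive _ (by omega : 1 ≤ 1 + m) (by omega : 1 + m ≤ b + m),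
    ← sum_Ico_add', add_comm]
  congr 1
  refine sum_congr rfl fun i _ => ?_
  rw [qm, Nat.div_div_eq_div_mul, ← pow_add, add_comm]

theorem Padic.norm_natCast_eq_zpow_neg_padicValNat {p : ℕ} [Fact p.Prime] {n : ℕ}
    (hn : n ≠ 0) : ‖(n : ℚ_[p])‖ = (p : ℝ) ^ (-(padicValNat p n : ℤ)) := by
  rw [Padic.norm_eq_zpow_neg_valuation (Nat.cast_ne_zero.2 hn), Padic.valuation_natCast]

theorem Submodule.mem_span_image_iff_exists_finset_sum {R M ι : Type*} [Semiring R]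
    [AddCommMonoid M] [Module R M] {v : ι → M} {t : Set ι} {x : M} :
    x ∈ span R (v '' t) ↔
      ∃ (s : Finset ι) (a : ι → R), (∀ i ∈ s, i ∈ t) ∧ x = ∑ i ∈ s, a i • v i := by
  constructor
  · rw [Finsupp.mem_span_image_iff_linearCombination]
    rintro ⟨l, hl, rfl⟩
    exact ⟨l.support, l, fun i hi => hl hi, rfl⟩
  · rintro ⟨s, a, hs, rfl⟩
    exact sum_mem fun i hi => smul_mem _ _ (subset_span ⟨i, hs i hi, rfl⟩)

theorem Submonoid.coe_closure_range_eq_range_prod_map {M ι : Type*} [Monoid M] (f : ι → M) :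
    (closure (Set.range f) : Set M) = Set.range fun w : List ι => (w.map f).prod := by
  rw [closure_eq_image_prod, ← Set.range_list_map, ← Set.range_comp]
  rfl

theorem Subalgebra.exists_sum_mul_eq_of_mem_span_image {R S ι : Type*} [CommSemiring R]
    [Semiring S] [Algebra R S] (A : Subalgebra R S) {v : ι → S} {s : Finset ι} {u : S}
    (hu : u ∈ Submodule.span A (v '' s)) :
    ∃ coef : ι → S, (∀ i, coef i ∈ A) ∧ u = ∑ i ∈ s, coef i * v i := by
  obtain ⟨l, hl, rfl⟩ := (Finsupp.mem_span_image_iff_linearCombination A).1 hu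
  refine ⟨fun i => l i, fun i => (l i).2, ?_⟩
  rw [Finsupp.linearCombination_apply,
    Finsupp.sum_of_support_subset l (Finset.coe_subset.1 hl) (fun i a => a • v i)
      fun _ _ => zero_smul _ _]
  rfl

lemma exists_fin_three_mul_add {ν d k : ℕ} (hν : ν ≤ d) (hk : k ≤ 2 * (ν + d)) :
    ∃ (e : Fin 3) (j : ℕ), j ≤ 2 * d ∧ k = (e : ℕ) * ν + j := by
  rcases le_or_gt (2 * ν) k with h2 | h2
  · exact ⟨2, k - 2 * ν, by omega, by simp; omega⟩
  rcases le_or_gt ν k with h1 | h1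
  · exact ⟨1, k - ν, by omega, by simp; omega⟩
  · exact ⟨0, k, by omega, by simp⟩

section
variable (p : ℕ) [Fact p.Prime] (m : ℕ)

lemma norm_cm (n : ℕ) : ‖cm p m n‖ = (p : ℝ) ^ legendreSum p m n := by
  have hp : (p : ℝ) ≠ 0 := Nat.cast_ne_zero.2 (Fact.out : p.Prime).ne_zero
  rw [cm, norm_div, Padic.norm_natCast_eq_zpow_neg_padicValNat n.factorial_ne_zero,
    Padic.norm_natCast_eq_zpow_neg_padicValNat (Nat.factorial_ne_zero _), ← zpow_sub₀ hp,
    padicValNat_factorial_eq_add_legendreSum p m n, ← zpow_natCast]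
  congr 1
  push_cast
  ring

lemma cm_ne_zero (n : ℕ) : cm p m n ≠ 0 :=
  div_ne_zero (Nat.cast_ne_zero.2 (Nat.factorial_ne_zero _))
    (Nat.cast_ne_zero.2 (Nat.factorial_ne_zero _))

lemma norm_cm_mul_cm_div_cm_add_le_one (a b : ℕ) :
    ‖cm p m a * cm p m b / cm p m (a + b)‖ ≤ 1 := by
  have hp : 1 ≤ (p : ℝ) := Nat.one_le_cast.2 (Fact.out : p.Prime).one_le
  rw [norm_div, norm_mul, norm_cm, norm_cm, norm_cm, ← pow_add,
    div_le_one (pow_pos (by linarith) _)]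
  exact pow_le_pow_right₀ hp (legendreSum_add_le p m a b)

lemma norm_cm_pow_mul_cm_div_cm_add (b : ℕ) :
    ‖cm p m (p ^ m) * cm p m b / cm p m (p ^ m + b)‖ = 1 := by
  rw [norm_div, norm_mul, norm_cm, norm_cm, norm_cm, ← pow_add, ← legendreSum_pow_add,
    div_self (pow_ne_zero _ (Nat.cast_ne_zero.2 (Fact.out : p.Prime).ne_zero))]

def mulCoeff (a b : ℕ) : ℤ_[p] :=
  ⟨cm p m a * cm p m b / cm p m (a + b), norm_cm_mul_cm_div_cm_add_le_one p m a b⟩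

lemma isUnit_mulCoeff_pow (b : ℕ) : IsUnit (mulCoeff p m (p ^ m) b) :=
  PadicInt.isUnit_iff.2 (norm_cm_pow_mul_cm_div_cm_add p m b)

lemma genA_mul_genM (e : Fin 3) (ν d k : ℕ) :
    genA p m (e, ν) * genM p m d k =
      mulCoeff p m ν d • genM p m (ν + d) ((e : ℕ) * ν + k) := by
  rw [← algebraMap_smul ℚ_[p], genA, genM, genM, smul_mul_smul_comm, smul_smul]
  congr 1
  · exact (div_mul_cancel₀ _ (cm_ne_zero p m _)).symm
  · ring

lemma PadicInt.coe_smul_mvPolynomial (z : ℤ_[p]) (u : MvPolynomial (Fin 2) ℚ_[p]) :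
    (z : ℚ_[p]) • u = z • u :=
  algebraMap_smul ℚ_[p] z u

def algA : Subalgebra ℤ_[p] (MvPolynomial (Fin 2) ℚ_[p]) :=
  Algebra.adjoin ℤ_[p] (Set.range (genA p m))

def modM : Submodule ℤ_[p] (MvPolynomial (Fin 2) ℚ_[p]) :=
  Submodule.span ℤ_[p] ((fun q : ℕ × ℕ => genM p m q.1 q.2) '' {q | q.2 ≤ 2 * q.1})

lemma coe_algA : (algA p m : Set (MvPolynomial (Fin 2) ℚ_[p])) = Aset p m := by
  ext u
  rw [SetLike.mem_coe, ← Subalgebra.mem_toSubmodule, algA, Algebra.adjoin_eq_span,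
    Submonoid.coe_closure_range_eq_range_prod_map, ← Set.image_univ,
    Submodule.mem_span_image_iff_exists_finset_sum]
  simp [Aset, PadicInt.coe_smul_mvPolynomial]

lemma coe_modM : (modM p m : Set (MvPolynomial (Fin 2) ℚ_[p])) = Mset p m := by
  ext u
  rw [SetLike.mem_coe, modM, Submodule.mem_span_image_iff_exists_finset_sum]
  simp [Mset, PadicInt.coe_smul_mvPolynomial]

lemma genA_mul_mem_modM (g : Fin 3 × ℕ) {u : MvPolynomial (Fin 2) ℚ_[p]} (hu : u ∈ modM p m) :
    genA p m g * u ∈ modM p m := by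
  induction hu using Submodule.span_induction with
  | mem x hx =>
    obtain ⟨⟨d, k⟩, hk, rfl⟩ := hx
    obtain ⟨e, ν⟩ := g
    rw [genA_mul_genM]
    refine Submodule.smul_mem _ _ (Submodule.subset_span ⟨(ν + d, (e : ℕ) * ν + k), ?_, rfl⟩)
    have hk : k ≤ 2 * d := hk
    have he : (e : ℕ) * ν ≤ 2 * ν := Nat.mul_le_mul_right ν (Nat.le_of_lt_succ e.isLt)
    change (e : ℕ) * ν + k ≤ 2 * (ν + d)
    omega
  | zero => rw [mul_zero]; exact zero_mem _
  | add x y _ _ hx hy => rw [mul_add]; exact add_mem hx hy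
  | smul z x _ hx => rw [mul_smul_comm]; exact Submodule.smul_mem _ z hx

lemma mul_mem_modM {a u : MvPolynomial (Fin 2) ℚ_[p]} (ha : a ∈ algA p m) (hu : u ∈ modM p m) :
    a * u ∈ modM p m := by
  induction ha using Algebra.adjoin_induction generalizing u with
  | mem x hx =>
    obtain ⟨g, rfl⟩ := hx
    exact genA_mul_mem_modM p m g hu
  | algebraMap z => rw [← Algebra.smul_def]; exact Submodule.smul_mem _ z hu
  | add x y _ _ hx hy => rw [add_mul]; exact add_mem (hx hu) (hy hu)
  | mul x y _ _ hx hy => rw [mul_assoc]; exact hx (hy hu)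

def lowDegreeIndices : Finset (ℕ × ℕ) :=
  ((Finset.range (2 * p ^ m)) ×ˢ (Finset.range (4 * p ^ m))).filter (fun q => q.2 ≤ 2 * q.1)

lemma genM_mem_span_lowDegreeIndices (d k : ℕ) (hk : k ≤ 2 * d) :
    genM p m d k ∈
      Submodule.span (algA p m) ((fun q : ℕ × ℕ => genM p m q.1 q.2) '' lowDegreeIndices p m) := by
  induction d using Nat.strong_induction_on generalizing k with
  | _ d ih =>
  by_cases hd : d < 2 * p ^ m
  · refine Submodule.subset_span ⟨(d, k), ?_, rfl⟩
    simp only [lowDegreeIndices, Finset.mem_coe, Finset.mem_filter, Finset.mem_product,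
      Finset.mem_range]
    omega
  have hpm : 0 < p ^ m := pow_pos (Fact.out : p.Prime).pos m
  obtain ⟨d', rfl⟩ : ∃ d', d = p ^ m + d' := ⟨d - p ^ m, by omega⟩
  obtain ⟨e, j, hj, rfl⟩ := exists_fin_three_mul_add (show p ^ m ≤ d' by omega) hk
  obtain ⟨u, hu⟩ := isUnit_mulCoeff_pow p m d'
  have hgen : ((u⁻¹ : ℤ_[p]ˣ) : ℤ_[p]) • genA p m (e, p ^ m) ∈ algA p m :=
    Subalgebra.smul_mem _ (Algebra.subset_adjoin (Set.mem_range_self _)) _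
  have hdecomp : genM p m (p ^ m + d') ((e : ℕ) * p ^ m + j) =
      (((u⁻¹ : ℤ_[p]ˣ) : ℤ_[p]) • genA p m (e, p ^ m)) * genM p m d' j := by
    rw [smul_mul_assoc, genA_mul_genM, ← hu, smul_smul, Units.inv_mul, one_smul]
  have hmem := Submodule.smul_mem _ (⟨_, hgen⟩ : algA p m) (ih d' (by omega) j hj)
  rwa [Subalgebra.smul_def, smul_eq_mul, ← hdecomp] at hmem

lemma modM_le_span_lowDegreeIndices :
    modM p m ≤ (Submodule.span (algA p m)
      ((fun q : ℕ × ℕ => genM p m q.1 q.2) '' lowDegreeIndices p m)).restrictScalars ℤ_[p] :=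
  Submodule.span_le.2 fun _ ⟨⟨d, k⟩, hk, hu⟩ => hu ▸ genM_mem_span_lowDegreeIndices p m d k hk

end

theorem Mset_module_finite_over_Aset (p : ℕ) [Fact p.Prime] (m : ℕ) :
    (∀ a ∈ Aset p m, ∀ u ∈ Mset p m, a * u ∈ Mset p m) ∧
    (∀ u ∈ Mset p m,
      ∃ coef : ℕ × ℕ → MvPolynomial (Fin 2) ℚ_[p],
        (∀ q, coef q ∈ Aset p m) ∧
        u = ∑ q ∈ ((Finset.range (2 * p ^ m)) ×ˢ (Finset.range (4 * p ^ m))).filter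
              (fun q => q.2 ≤ 2 * q.1),
            coef q * genM p m q.1 q.2) := by
  simp only [← coe_algA, ← coe_modM, SetLike.mem_coe]
  refine ⟨fun a ha u hu => mul_mem_modM p m ha hu, fun u hu => ?_⟩
  exact Subalgebra.exists_sum_mul_eq_of_mem_span_image _ (modM_le_span_lowDegreeIndices p m hu)
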